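/- With the notation of the UCFG/HMM setup, the vectors β_{G,A'}^{(L)} := Σ_{w ∈ Σ^L} β_G(w) ⊗ vec(A'_w) satisfy the recursion: β_{G,A'}^{(1)} = Σ_{σ∈Σ} β_σ ⊗ vec(A'_σ), and for L ≥ 2, β_{G,A'}^{(L)} = (M ⊗ T)₁ · P · Σ_{i=1}^{L−1} β_{G,A'}^{(i)} ⊗ β_{G,A'}^{(L−i)}, where P is the permutation matrix sending e_i^{(n)} ⊗ e_j^{(n'²)} ⊗ e_k^{(n)} ⊗ e_l^{(n'²)} to e_i^{(n)} ⊗ e_k^{(n)} ⊗ e_j^{(n'²)} ⊗ e_l^{(n'²)}. -/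

import Mathlib

/-!
Unfolding the root of a derivation tree writes the number of derivations of a word `w` of
length `≥ 2` as a sum, over the split points `w = w₁ ++ w₂` and the binary rules `i → j k`, of
the products of the numbers of derivations of `w₁` from `j` and of `w₂` from `k`. Since
`A'_w = A'_{w₁} A'_{w₂}`, regrouping the words of length `L` by their split point turns
`β^{(L)}`, viewed as a family of `n' × n'` matrices, into `Σ_m Σ_{j,k} M_{ijk} β^{(m)}_j β^{(L-m)}_k`;
the tensor `T` is the matrix product in vectorised form.
-/

open Matrix

/-- A context-free grammar in Chomsky normal form. -/
structure CNF (N α : Type) where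
  bin : N → N → N → Prop
  ter : N → α → Prop
  start : N

inductive Deriv {N α : Type} (G : CNF N α) : N → List α → Type
  | leaf {i : N} {s : α} : G.ter i s → Deriv G i [s]
  | node {i j k : N} {w₁ w₂ : List α} :
      G.bin i j k → w₁ ≠ [] → w₂ ≠ [] →
      Deriv G j w₁ → Deriv G k w₂ → Deriv G i (w₁ ++ w₂)

/-- The composition tensor `T` of an HMM (cf. `vec(AB) = T₁·(vec A ⊗ vec B)`). -/
def Thmm (n : ℕ) : (Fin n × Fin n) → (Fin n × Fin n) → (Fin n × Fin n) → ℝ :=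
  fun p q r => if p.1 = q.1 ∧ p.2 = r.2 ∧ q.2 = r.1 then 1 else 0

/-- The forward vector `β_{G,A'}^{(L)} = Σ_{w ∈ Σ^L} β_G(w) ⊗ vec(A'_w)`. -/
noncomputable def betaGA {n n' : ℕ} {α : Type} [Fintype α] (G : CNF (Fin n) α)
    (A : α → Matrix (Fin n') (Fin n') ℝ) (L : ℕ) :
    Fin n × (Fin n' × Fin n') → ℝ :=
  fun p => ∑ w : Fin L → α,
    (Nat.card (Deriv G p.1 (List.ofFn w)) : ℝ) *
      ((List.ofFn w).map A).prod p.2.1 p.2.2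

abbrev List.NonemptySplit {α : Type} (w : List α) : Type :=
  {p : List α × List α // p.1 ≠ [] ∧ p.2 ≠ [] ∧ p.1 ++ p.2 = w}

namespace List.NonemptySplit

variable {α : Type} {w : List α}

theorem length_fst_lt (p : w.NonemptySplit) : p.1.1.length < w.length := by
  obtain ⟨⟨w₁, w₂⟩, -, h₂, rfl⟩ := p
  simpa [List.length_pos_iff] using h₂

theorem length_snd_lt (p : w.NonemptySplit) : p.1.2.length < w.length := by
  obtain ⟨⟨w₁, w₂⟩, h₁, -, rfl⟩ := p
  simpa [List.length_pos_iff] using h₁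

variable (w) in
def equivIco : Finset.Ico 1 w.length ≃ w.NonemptySplit where
  toFun m := ⟨(w.take m, w.drop m), by
    obtain ⟨m, hm⟩ := m
    rw [Finset.mem_Ico] at hm
    refine ⟨?_, ?_, List.take_append_drop m w⟩ <;> simp [← List.length_pos_iff] <;> omega⟩
  invFun p := ⟨p.1.1.length, by
    obtain ⟨⟨w₁, w₂⟩, h₁, h₂, rfl⟩ := p
    simpa [Nat.one_le_iff_ne_zero, List.length_pos_iff] using ⟨h₁, h₂⟩⟩
  left_inv m := by
    obtain ⟨m, hm⟩ := m
    rw [Finset.mem_Ico] at hm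
    ext; simp; omega
  right_inv p := by
    obtain ⟨⟨w₁, w₂⟩, h₁, h₂, rfl⟩ := p
    ext <;> simp

instance : Finite w.NonemptySplit := .of_equiv _ (equivIco w)

end List.NonemptySplit

namespace Deriv

variable {N α : Type} {G : CNF N α}

variable (G) in
abbrev Unfolding (i : N) (w : List α) : Type :=
  {s : α // w = [s] ∧ G.ter i s} ⊕
    Σ (p : w.NonemptySplit) (jk : N × N),
      PLift (G.bin i jk.1 jk.2) × Deriv G jk.1 p.1.1 × Deriv G jk.2 p.1.2

def equivUnfolding {i : N} {w : List α} : Deriv G i w ≃ Unfolding G i w where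
  toFun
    | .leaf h => .inl ⟨_, rfl, h⟩
    | .node b h₁ h₂ d₁ d₂ => .inr ⟨⟨(_, _), h₁, h₂, rfl⟩, (_, _), ⟨b⟩, d₁, d₂⟩
  invFun
    | .inl ⟨_, hw, h⟩ => hw ▸ .leaf h
    | .inr ⟨⟨_, h₁, h₂, hw⟩, _, ⟨b⟩, d₁, d₂⟩ => hw ▸ .node b h₁ h₂ d₁ d₂
  left_inv d := by cases d <;> rfl
  right_inv := by
    rintro (⟨s, rfl, h⟩ | ⟨⟨⟨w₁, w₂⟩, h₁, h₂, rfl⟩, jk, ⟨b⟩, d₁, d₂⟩) <;> rfl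

instance (i : N) (w : List α) : Subsingleton {s : α // w = [s] ∧ G.ter i s} :=
  ⟨fun ⟨_, hs, _⟩ ⟨_, ht, _⟩ => Subtype.ext (List.singleton_injective (hs.symm.trans ht))⟩

instance finite [Finite N] (i : N) (w : List α) : Finite (Deriv G i w) :=
  have (p : w.NonemptySplit) (j : N) : Finite (Deriv G j p.1.1) := finite j p.1.1
  have (p : w.NonemptySplit) (j : N) : Finite (Deriv G j p.1.2) := finite j p.1.2
  .of_equiv _ equivUnfolding.symm
termination_by w.length
decreasing_by
  · exact p.length_fst_lt
  · exact p.length_snd_lt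

end Deriv

theorem Nat.card_plift_prop (P : Prop) [Decidable P] : Nat.card (PLift P) = if P then 1 else 0 := by
  by_cases h : P <;> simp [h]

namespace Deriv

variable {N α : Type} [Fintype N] {G : CNF N α}

open scoped Classical in
theorem card_eq (i : N) (w : List α) :
    Nat.card (Deriv G i w) = Nat.card {s : α // w = [s] ∧ G.ter i s} +
      ∑ m ∈ Finset.Ico 1 w.length, ∑ jk : N × N,
        (if G.bin i jk.1 jk.2 then 1 else 0) *
          (Nat.card (Deriv G jk.1 (w.take m)) * Nat.card (Deriv G jk.2 (w.drop m))) := by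
  rw [Nat.card_congr equivUnfolding, Nat.card_sum,
    ← Nat.card_congr (Equiv.sigmaCongrLeft (List.NonemptySplit.equivIco w)), Nat.card_sigma]
  simp only [Nat.card_sigma, Nat.card_prod, Nat.card_plift_prop]
  conv_rhs => rw [← Finset.sum_coe_sort]
  rfl

open scoped Classical in
theorem card_singleton (i : N) (s : α) :
    Nat.card (Deriv G i [s]) = if G.ter i s then 1 else 0 := by
  have : Nat.card {t : α // [s] = [t] ∧ G.ter i t} = if G.ter i s then 1 else 0 := by
    split_ifs with h
    · exact Nat.card_eq_one_iff_unique.mpr ⟨inferInstance, ⟨⟨s, rfl, h⟩⟩⟩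
    · have : IsEmpty {t : α // [s] = [t] ∧ G.ter i t} := ⟨fun ⟨t, hst, ht⟩ => h (by simp_all)⟩
      exact Nat.card_of_isEmpty
  rw [card_eq, this]
  simp

open scoped Classical in
theorem card_of_two_le_length (i : N) {w : List α} (hw : 2 ≤ w.length) :
    Nat.card (Deriv G i w) = ∑ m ∈ Finset.Ico 1 w.length, ∑ jk : N × N,
        (if G.bin i jk.1 jk.2 then 1 else 0) *
          (Nat.card (Deriv G jk.1 (w.take m)) * Nat.card (Deriv G jk.2 (w.drop m))) := by
  have : IsEmpty {s : α // w = [s] ∧ G.ter i s} := ⟨fun ⟨s, hs, _⟩ => by simp [hs] at hw⟩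
  rw [card_eq, Nat.card_of_isEmpty, zero_add]

end Deriv

theorem sum_fin_add_nsmul_prod_take_drop {α R : Type} [Fintype α] [Semiring R] (A : α → R)
    (f g : List α → ℕ) (m l : ℕ) :
    ∑ w : Fin (m + l) → α,
        (f ((List.ofFn w).take m) * g ((List.ofFn w).drop m)) • ((List.ofFn w).map A).prod =
      (∑ u : Fin m → α, f (List.ofFn u) • ((List.ofFn u).map A).prod) *
        ∑ v : Fin l → α, g (List.ofFn v) • ((List.ofFn v).map A).prod := by
  rw [← (Fin.appendEquiv m l).sum_comp, Fintype.sum_prod_type, Finset.sum_mul_sum]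
  refine Finset.sum_congr rfl fun u _ => Finset.sum_congr rfl fun v _ => ?_
  have hw : List.ofFn (Fin.appendEquiv m l (u, v)) = List.ofFn u ++ List.ofFn v :=
    List.ofFn_fin_append u v
  rw [hw, List.take_left' (List.length_ofFn ..), List.drop_left' (List.length_ofFn ..),
    List.map_append, List.prod_append, smul_mul_smul_comm]

section

variable {n n' : ℕ} {α : Type} [Fintype α] (G : CNF (Fin n) α)
  (A : α → Matrix (Fin n') (Fin n') ℝ)

noncomputable def betaGAMatrix (L : ℕ) (i : Fin n) : Matrix (Fin n') (Fin n') ℝ :=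
  Matrix.of fun a b => betaGA G A L (i, (a, b))

theorem betaGAMatrix_eq_sum (L : ℕ) (i : Fin n) :
    betaGAMatrix G A L i =
      ∑ w : Fin L → α, Nat.card (Deriv G i (List.ofFn w)) • ((List.ofFn w).map A).prod := by
  ext a b
  simp only [betaGAMatrix, betaGA, Matrix.of_apply, Matrix.sum_apply, Matrix.smul_apply]
  simp only [nsmul_eq_mul]

open scoped Classical in
theorem betaGAMatrix_of_two_le {L : ℕ} (hL : 2 ≤ L) (i : Fin n) :
    betaGAMatrix G A L i = ∑ m ∈ Finset.Ico 1 L, ∑ jk : Fin n × Fin n,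
      (if G.bin i jk.1 jk.2 then 1 else 0) •
        (betaGAMatrix G A m jk.1 * betaGAMatrix G A (L - m) jk.2) := by
  calc betaGAMatrix G A L i
      = ∑ w : Fin L → α, ∑ m ∈ Finset.Ico 1 L, ∑ jk : Fin n × Fin n,
          ((if G.bin i jk.1 jk.2 then 1 else 0) *
            (Nat.card (Deriv G jk.1 ((List.ofFn w).take m)) *
              Nat.card (Deriv G jk.2 ((List.ofFn w).drop m)))) • ((List.ofFn w).map A).prod := by
        simp only [betaGAMatrix_eq_sum]
        refine Finset.sum_congr rfl fun w _ => ?_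
        rw [Deriv.card_of_two_le_length _ (by simpa using hL), List.length_ofFn, Finset.sum_smul]
        simp only [Finset.sum_smul]
    _ = ∑ m ∈ Finset.Ico 1 L, ∑ jk : Fin n × Fin n, (if G.bin i jk.1 jk.2 then 1 else 0) •
          ∑ w : Fin L → α, (Nat.card (Deriv G jk.1 ((List.ofFn w).take m)) *
              Nat.card (Deriv G jk.2 ((List.ofFn w).drop m))) • ((List.ofFn w).map A).prod := by
        rw [Finset.sum_comm]
        simp only [Finset.smul_sum, mul_smul]
        exact Finset.sum_congr rfl fun _ _ => Finset.sum_comm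
    _ = _ := by
        refine Finset.sum_congr rfl fun m hm => ?_
        obtain ⟨l, rfl⟩ : ∃ l, L = m + l := ⟨L - m, by grind⟩
        refine Finset.sum_congr rfl fun jk _ => ?_
        rw [betaGAMatrix_eq_sum, betaGAMatrix_eq_sum, Nat.add_sub_cancel_left,
          ← sum_fin_add_nsmul_prod_take_drop A (fun u => Nat.card (Deriv G jk.1 u))
            (fun v => Nat.card (Deriv G jk.2 v))]

end

theorem sum_Thmm_mul {n : ℕ} (X Y : Matrix (Fin n) (Fin n) ℝ) (a b : Fin n) :
    ∑ q : Fin n × Fin n, ∑ r : Fin n × Fin n, Thmm n (a, b) q r * (X q.1 q.2 * Y r.1 r.2) =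
      (X * Y) a b := by
  simp [Thmm, Fintype.sum_prod_type, ite_and, Matrix.mul_apply]

open scoped Classical in
/-- Stated entrywise: the permutation `P` reorders the index `(j, q, k, r)` into `(j, k, q, r)`. -/
theorem stmt7_general {n n' : ℕ} {α : Type} [Fintype α] (G : CNF (Fin n) α)
    (A : α → Matrix (Fin n') (Fin n') ℝ) :
    (∀ p : Fin n × (Fin n' × Fin n'),
      betaGA G A 1 p =
        ∑ s : α, (if G.ter p.1 s then (1 : ℝ) else 0) * A s p.2.1 p.2.2) ∧
    (∀ L : ℕ, 2 ≤ L → ∀ p : Fin n × (Fin n' × Fin n'),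
      betaGA G A L p =
        ∑ m ∈ Finset.Ico 1 L,
          ∑ jk : Fin n × Fin n, ∑ q : Fin n' × Fin n', ∑ r : Fin n' × Fin n',
            ((if G.bin p.1 jk.1 jk.2 then (1 : ℝ) else 0) * Thmm n' p.2 q r) *
              (betaGA G A m (jk.1, q) * betaGA G A (L - m) (jk.2, r))) := by
  refine ⟨fun p => ?_, fun L hL ⟨i, a, b⟩ => ?_⟩
  · refine Fintype.sum_equiv (Equiv.funUnique (Fin 1) α) _ _ fun w => ?_
    simp [List.ofFn_succ, Deriv.card_singleton]
  · have h := congrArg (· a b) (betaGAMatrix_of_two_le G A hL i)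
    simp only [betaGAMatrix, Matrix.of_apply, Matrix.sum_apply, Matrix.smul_apply] at h
    rw [h]
    refine Finset.sum_congr rfl fun m _ => Finset.sum_congr rfl fun jk _ => ?_
    simp only [mul_assoc, ← Finset.mul_sum, ← sum_Thmm_mul]
    split_ifs <;> simp

open scoped Classical in
/-- The recursion for the forward vectors:
`β^{(1)} = Σ_σ β_σ ⊗ vec(A'_σ)` and for `L ≥ 2`,
`β^{(L)} = (M ⊗ T)₁ · P · Σ_{i=1}^{L-1} β^{(i)} ⊗ β^{(L-i)}`, stated entrywise
(the permutation `P` reorders `(j,q,k,r)` into `(j,k,q,r)`). -/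
theorem stmt7 {n n' : ℕ} {α : Type} [Fintype α] (G : CNF (Fin n) α)
    (hU : ∀ w : List α, Nat.card (Deriv G G.start w) ≤ 1)
    (π' : Fin n' → ℝ) (A : α → Matrix (Fin n') (Fin n') ℝ)
    (hπ0 : ∀ i, 0 ≤ π' i) (hπ1 : ∑ i, π' i = 1)
    (hA0 : ∀ s i j, 0 ≤ A s i j)
    (hstoch : ∀ i, ∑ s : α, ∑ j, A s i j = 1) :
    (∀ p : Fin n × (Fin n' × Fin n'),
      betaGA G A 1 p =
        ∑ s : α, (if G.ter p.1 s then (1 : ℝ) else 0) * A s p.2.1 p.2.2) ∧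
    (∀ L : ℕ, 2 ≤ L → ∀ p : Fin n × (Fin n' × Fin n'),
      betaGA G A L p =
        ∑ m ∈ Finset.Ico 1 L,
          ∑ jk : Fin n × Fin n, ∑ q : Fin n' × Fin n', ∑ r : Fin n' × Fin n',
            ((if G.bin p.1 jk.1 jk.2 then (1 : ℝ) else 0) * Thmm n' p.2 q r) *
              (betaGA G A m (jk.1, q) * betaGA G A (L - m) (jk.2, r))) :=
  stmt7_general G A
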